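/- Pressure of the mean-field Bose gas with gap, non-condensed branch: let β > 0, λ > 0, and let Δ ≥ 0 be such that ρ^P(β, −Δ) < ∞. Then for every chemical potential μ ≤ −Δ + λ·ρ^P(β, −Δ), the mean-field pressure with gap coincides with the gapless one: p_λ^Δ(β,μ) = p_λ^{Δ=0}(β,μ), i.e. sup_{ρ ≥ 0} ( μρ − f^{P,Δ}(β,ρ) − λρ²/2 ) = sup_{ρ ≥ 0} ( μρ − f^{P,0}(β,ρ) − λρ²/2 ). -/

import Mathlib

open MeasureTheory Filter

/-- Thermodynamic-limit pressure of the perfect Bose gas: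
`p^P(β,μ) = -(1/(β (2π)^ν)) ∫ log(1 - e^{-β(|k|² - μ)}) dk`. -/
noncomputable def pP (ν : ℕ) (β μ : ℝ) : ℝ :=
  -(1 / (β * (2 * Real.pi) ^ ν)) *
    ∫ k : EuclideanSpace ℝ (Fin ν), Real.log (1 - Real.exp (-(β * (‖k‖ ^ 2 - μ))))

/-- Thermodynamic-limit total density of the perfect Bose gas:
`ρ^P(β,μ) = (2π)^{-ν} ∫ (e^{β(|k|² - μ)} - 1)⁻¹ dk`. -/
noncomputable def rhoP (ν : ℕ) (β μ : ℝ) : ℝ :=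
  ((2 * Real.pi) ^ ν)⁻¹ *
    ∫ k : EuclideanSpace ℝ (Fin ν), (Real.exp (β * (‖k‖ ^ 2 - μ)) - 1)⁻¹

/-- Free energy of the perfect Bose gas with gap `Δ`:
`f^{P,Δ}(β,ρ) = sup_{μ ≤ -Δ} (ρ μ - p^P(β,μ))`. -/
noncomputable def fP (ν : ℕ) (β Δ ρ : ℝ) : ℝ :=
  sSup ((fun μ => ρ * μ - pP ν β μ) '' Set.Iic (-Δ))

/-- Grand-canonical pressure of the mean-field Bose gas with gap `Δ` and coupling `lam`:
`p_λ^Δ(β,μ) = sup_{ρ ≥ 0} (μ ρ - f^{P,Δ}(β,ρ) - λ ρ²/2)`. -/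
noncomputable def pMF (ν : ℕ) (β lam Δ μ : ℝ) : ℝ :=
  sSup ((fun ρ => μ * ρ - fP ν β Δ ρ - lam * ρ ^ 2 / 2) '' Set.Ici 0)

lemma exp_sub_one_pos {t : ℝ} (ht : 0 < t) : 0 < Real.exp t - 1 := by
  have : (1:ℝ) < Real.exp t := by
    calc (1:ℝ) < 1 + t := by linarith
    _ ≤ Real.exp t := Real.add_one_le_exp t |>.trans_eq' (by ring)
  linarith

lemma log_tangent {x y : ℝ} (hx : 0 < x) (hy : 0 < y) :
    -Real.log (1 - Real.exp (-y)) + (y - x) * (Real.exp y - 1)⁻¹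
      ≤ -Real.log (1 - Real.exp (-x)) := by
  set c : ℝ := (Real.exp y - 1)⁻¹ with hc
  set φ : ℝ → ℝ := fun t => -Real.log (1 - Real.exp (-t)) + t * c with hφ
  have hder : ∀ t : ℝ, 0 < t → HasDerivAt φ (-(Real.exp t - 1)⁻¹ + c) t := by
    intro t ht
    have h1 : Real.exp (-t) < 1 := by
      rw [Real.exp_lt_one_iff]; linarith
    have h2 : (1 : ℝ) - Real.exp (-t) ≠ 0 := by linarith
    have hlog : HasDerivAt (fun t => Real.log (1 - Real.exp (-t)))
        (Real.exp (-t) / (1 - Real.exp (-t))) t := by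
      have hexp : HasDerivAt (fun t : ℝ => 1 - Real.exp (-t)) (Real.exp (-t)) t := by
        have := (Real.hasDerivAt_exp (-t)).comp t (hasDerivAt_neg t)
        exact ((hasDerivAt_const t (1:ℝ)).sub this).congr_deriv (by simp)
      simpa using hexp.log h2
    have heq : Real.exp (-t) / (1 - Real.exp (-t)) = (Real.exp t - 1)⁻¹ := by
      rw [Real.exp_neg]
      have h3 : Real.exp t ≠ 0 := (Real.exp_pos t).ne'
      have h4 : Real.exp t - 1 ≠ 0 := (exp_sub_one_pos ht).ne'
      field_simp
    have := (hlog.neg).add ((hasDerivAt_id t).mul_const c)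
    rw [heq] at this
    exact this.congr_deriv (by ring)
  -- now two cases
  have key : φ y ≤ φ x := by
    rcases le_total x y with h | h
    · have hanti : AntitoneOn φ (Set.Icc x y) := by
        apply antitoneOn_of_deriv_nonpos (convex_Icc x y)
        · intro t ht
          exact (hder t (hx.trans_le ht.1)).continuousAt.continuousWithinAt
        · intro t ht
          rw [interior_Icc] at ht
          exact (hder t (hx.trans ht.1)).differentiableAt.differentiableWithinAt
        · intro t ht
          rw [interior_Icc] at ht
          rw [(hder t (hx.trans ht.1)).deriv]
          have h5 : 0 < Real.exp t - 1 := exp_sub_one_pos (hx.trans ht.1)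
          have h6 : Real.exp t - 1 ≤ Real.exp y - 1 := by
            have := Real.exp_le_exp.mpr ht.2.le; linarith
          have := inv_anti₀ h5 h6
          rw [hc]; linarith
      exact hanti (Set.left_mem_Icc.mpr h) (Set.right_mem_Icc.mpr h) h
    · have hmono : MonotoneOn φ (Set.Icc y x) := by
        apply monotoneOn_of_deriv_nonneg (convex_Icc y x)
        · intro t ht
          exact (hder t (hy.trans_le ht.1)).continuousAt.continuousWithinAt
        · intro t ht
          rw [interior_Icc] at ht
          exact (hder t (hy.trans ht.1)).differentiableAt.differentiableWithinAt
        · intro t ht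
          rw [interior_Icc] at ht
          rw [(hder t (hy.trans ht.1)).deriv]
          have h5 : 0 < Real.exp y - 1 := exp_sub_one_pos hy
          have h6 : Real.exp y - 1 ≤ Real.exp t - 1 := by
            have := Real.exp_le_exp.mpr ht.1.le; linarith
          have := inv_anti₀ h5 h6
          rw [hc]; linarith
      exact hmono (Set.left_mem_Icc.mpr h) (Set.right_mem_Icc.mpr h) h
  have : -Real.log (1 - Real.exp (-y)) + y * c ≤ -Real.log (1 - Real.exp (-x)) + x * c := key
  linarith [this]

lemma integrable_gauss (ν : ℕ) {b : ℝ} (hb : 0 < b) :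
    Integrable (fun k : EuclideanSpace ℝ (Fin ν) => Real.exp (-b * ‖k‖^2)) := by
  have h := (GaussianFourier.integrable_cexp_neg_mul_sq_norm_add
    (b := (b:ℂ)) (by simpa using hb) 0 (0 : EuclideanSpace ℝ (Fin ν))).norm
  have : (fun v : EuclideanSpace ℝ (Fin ν) =>
      ‖Complex.exp (-(b:ℂ) * (‖v‖:ℂ)^2 + 0 * (inner ℝ (0 : EuclideanSpace ℝ (Fin ν)) v : ℝ))‖)
      = fun v => Real.exp (-b * ‖v‖^2) := by
    funext v
    rw [Complex.norm_exp]
    norm_num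
    left
    norm_cast
  rwa [this] at h

lemma integral_gauss (ν : ℕ) {b : ℝ} (hb : 0 < b) :
    ∫ k : EuclideanSpace ℝ (Fin ν), Real.exp (-b * ‖k‖^2)
      = (Real.pi / b) ^ ((ν : ℝ)/2) := by
  rw [GaussianFourier.integral_rexp_neg_mul_sq_norm hb]
  norm_num [finrank_euclideanSpace_fin]

lemma ae_ne_zero (ν : ℕ) (hν : 1 ≤ ν) :
    ∀ᵐ k : EuclideanSpace ℝ (Fin ν), k ≠ 0 := by
  haveI : Nonempty (Fin ν) := ⟨⟨0, hν⟩⟩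
  haveI : Nontrivial (EuclideanSpace ℝ (Fin ν)) := inferInstance
  have h : volume ({0} : Set (EuclideanSpace ℝ (Fin ν))) = 0 := measure_singleton 0
  rw [ae_iff]
  simpa using h

lemma integrable_log_term (ν : ℕ) (hν : 1 ≤ ν) {β : ℝ} (hβ : 0 < β) {μ : ℝ} (hμ : μ ≤ 0) :
    Integrable (fun k : EuclideanSpace ℝ (Fin ν) =>
      Real.log (1 - Real.exp (-(β * (‖k‖ ^ 2 - μ))))) := by
  set E := EuclideanSpace ℝ (Fin ν)
  set g : ℕ → E → ℝ := fun n k =>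
    Real.exp (-(((n:ℝ)+1) * β) * ‖k‖^2) * Real.exp ((((n:ℝ)+1) * β) * μ) / ((n:ℝ)+1) with hg
  have hcpos : ∀ n : ℕ, 0 < ((n:ℝ)+1) * β := fun n => by positivity
  have hgnonneg : ∀ n (k : E), 0 ≤ g n k := fun n k => by positivity
  have hgint : ∀ n, Integrable (g n) := by
    intro n
    exact ((integrable_gauss ν (hcpos n)).mul_const _).div_const _
  have hmeas : AEStronglyMeasurable
      (fun k : E => Real.log (1 - Real.exp (-(β * (‖k‖ ^ 2 - μ))))) volume := by
    apply Measurable.aestronglyMeasurable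
    apply Real.measurable_log.comp
    fun_prop
  have hpt : ∀ k : E, k ≠ 0 →
      HasSum (fun n => g n k) (-Real.log (1 - Real.exp (-(β * (‖k‖ ^ 2 - μ))))) := by
    intro k hk
    have hknorm : 0 < ‖k‖ := norm_pos_iff.mpr hk
    have hw : 0 < ‖k‖^2 - μ := by nlinarith
    set x : ℝ := Real.exp (-(β * (‖k‖^2 - μ))) with hx
    have hx0 : 0 < x := Real.exp_pos _
    have hx1 : x < 1 := by
      rw [hx, Real.exp_lt_one_iff]
      nlinarith
    have habs : |x| < 1 := by rw [abs_of_pos hx0]; exact hx1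
    have hs := Real.hasSum_pow_div_log_of_abs_lt_one habs
    convert hs using 2 with n
    rw [hg]
    simp only
    rw [div_eq_div_iff (by positivity) (by positivity)]
    congr 1
    rw [← Real.exp_add, hx, ← Real.exp_nat_mul]
    congr 1
    push_cast
    ring
  have key : Integrable (fun k : E => -Real.log (1 - Real.exp (-(β * (‖k‖ ^ 2 - μ))))) := by
    refine ⟨hmeas.neg, ?_⟩
    rw [hasFiniteIntegral_iff_norm (fun k : E =>
      -Real.log (1 - Real.exp (-(β * (‖k‖ ^ 2 - μ)))))]
    have hlin : ∫⁻ k : E, ENNReal.ofReal ‖-Real.log (1 - Real.exp (-(β * (‖k‖ ^ 2 - μ))))‖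
        = ∫⁻ k : E, ∑' n, ENNReal.ofReal (g n k) := by
      apply lintegral_congr_ae
      filter_upwards [ae_ne_zero ν hν] with k hk
      have hsum := hpt k hk
      have hge : 0 ≤ -Real.log (1 - Real.exp (-(β * (‖k‖ ^ 2 - μ)))) := by
        rw [← hsum.tsum_eq]
        exact tsum_nonneg (fun n => hgnonneg n k)
      rw [Real.norm_eq_abs, abs_of_nonneg hge, ← hsum.tsum_eq,
        ENNReal.ofReal_tsum_of_nonneg (fun n => hgnonneg n k) hsum.summable]
    rw [hlin, lintegral_tsum (fun n =>
      ((hgint n).aestronglyMeasurable.aemeasurable).ennreal_ofReal)]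
    have hval : ∀ n : ℕ, ∫⁻ k : E, ENNReal.ofReal (g n k)
        = ENNReal.ofReal ((Real.pi / (((n:ℝ)+1) * β)) ^ ((ν : ℝ)/2)
            * Real.exp ((((n:ℝ)+1) * β) * μ) / ((n:ℝ)+1)) := by
      intro n
      rw [← ofReal_integral_eq_lintegral_ofReal (hgint n)
        (Filter.Eventually.of_forall (fun k => hgnonneg n k))]
      congr 1
      rw [hg]
      simp only
      rw [integral_div, integral_mul_const, integral_gauss ν (hcpos n)]
    simp_rw [hval]
    -- compare with a summable series
    set C : ℝ := (Real.pi / β) ^ ((ν : ℝ)/2) + 1 with hC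
    have hCpos : 0 < C := by
      have : (0:ℝ) ≤ (Real.pi / β) ^ ((ν : ℝ)/2) := by positivity
      rw [hC]; linarith
    have hbound : ∀ n : ℕ,
        (Real.pi / (((n:ℝ)+1) * β)) ^ ((ν : ℝ)/2) * Real.exp ((((n:ℝ)+1) * β) * μ) / ((n:ℝ)+1)
        ≤ C * ((n:ℝ)+1) ^ (-(3/2 : ℝ)) := by
      intro n
      have hn1 : (0:ℝ) < (n:ℝ)+1 := by positivity
      have h1 : Real.exp ((((n:ℝ)+1) * β) * μ) ≤ 1 := by
        rw [Real.exp_le_one_iff]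
        exact mul_nonpos_of_nonneg_of_nonpos (le_of_lt (hcpos n)) hμ
      have h2 : (Real.pi / (((n:ℝ)+1) * β)) ^ ((ν : ℝ)/2)
          ≤ (Real.pi / β) ^ ((ν : ℝ)/2) * ((n:ℝ)+1) ^ (-(1/2 : ℝ)) := by
        have hπ : 0 < Real.pi := Real.pi_pos
        have heq : Real.pi / (((n:ℝ)+1) * β) = (Real.pi / β) * (((n:ℝ)+1)⁻¹) := by
          rw [mul_comm, ← div_div, div_eq_mul_inv]
        rw [heq, Real.mul_rpow (by positivity) (by positivity)]
        apply mul_le_mul_of_nonneg_left _ (by positivity)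
        rw [← Real.rpow_neg_one ((n:ℝ)+1), ← Real.rpow_mul (le_of_lt hn1)]
        apply Real.rpow_le_rpow_of_exponent_le (by linarith [Nat.cast_nonneg (α := ℝ) n])
        have hν' : (1:ℝ) ≤ (ν:ℝ) := by exact_mod_cast hν
        linarith
      calc (Real.pi / (((n:ℝ)+1) * β)) ^ ((ν : ℝ)/2) * Real.exp ((((n:ℝ)+1) * β) * μ) / ((n:ℝ)+1)
          ≤ (Real.pi / (((n:ℝ)+1) * β)) ^ ((ν : ℝ)/2) * 1 / ((n:ℝ)+1) := by
            apply div_le_div_of_nonneg_right _ hn1.le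
            exact mul_le_mul_of_nonneg_left h1 (by positivity)
        _ ≤ ((Real.pi / β) ^ ((ν : ℝ)/2) * ((n:ℝ)+1) ^ (-(1/2 : ℝ))) / ((n:ℝ)+1) := by
            rw [mul_one]
            exact div_le_div_of_nonneg_right h2 hn1.le
        _ = (Real.pi / β) ^ ((ν : ℝ)/2) * ((n:ℝ)+1) ^ (-(3/2 : ℝ)) := by
            rw [div_eq_mul_inv, mul_assoc, ← Real.rpow_neg_one ((n:ℝ)+1),
              ← Real.rpow_add hn1]
            norm_num
        _ ≤ C * ((n:ℝ)+1) ^ (-(3/2 : ℝ)) := by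
            apply mul_le_mul_of_nonneg_right _ (by positivity)
            rw [hC]; linarith
    have hsummable : Summable (fun n : ℕ => C * ((n:ℝ)+1) ^ (-(3/2 : ℝ))) := by
      apply Summable.mul_left
      have h0 : Summable (fun n : ℕ => ((n:ℝ)) ^ (-(3/2) : ℝ)) :=
        Real.summable_nat_rpow.mpr (by norm_num)
      have := (summable_nat_add_iff 1).mpr h0
      convert this using 2 with n
      · rfl
      · push_cast
        rfl
    calc ∑' (n : ℕ), ENNReal.ofReal ((Real.pi / (((n:ℝ)+1) * β)) ^ ((ν : ℝ)/2)
            * Real.exp ((((n:ℝ)+1) * β) * μ) / ((n:ℝ)+1))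
        ≤ ∑' (n : ℕ), ENNReal.ofReal (C * ((n:ℝ)+1) ^ (-(3/2 : ℝ))) :=
          ENNReal.tsum_le_tsum (fun n => ENNReal.ofReal_le_ofReal (hbound n))
      _ < ⊤ := by
          rw [← ENNReal.ofReal_tsum_of_nonneg (fun n => by positivity) hsummable]
          exact ENNReal.ofReal_lt_top
  have := key.neg
  simp only [Pi.neg_def, neg_neg] at this
  exact this

lemma pP_tangent (ν : ℕ) (hν : 1 ≤ ν) {β : ℝ} (hβ : 0 < β) {Δ : ℝ} (hΔ : 0 ≤ Δ)
    (hfin : Integrable (fun k : EuclideanSpace ℝ (Fin ν) =>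
      (Real.exp (β * (‖k‖ ^ 2 + Δ)) - 1)⁻¹))
    {μ : ℝ} (hμ : μ ≤ 0) :
    pP ν β (-Δ) + rhoP ν β (-Δ) * (μ + Δ) ≤ pP ν β μ := by
  set E := EuclideanSpace ℝ (Fin ν)
  have h2π : (0:ℝ) < (2 * Real.pi) ^ ν := by positivity
  set c : ℝ := β * (2 * Real.pi) ^ ν with hcdef
  have hc : 0 < c := by positivity
  set F : ℝ → E → ℝ := fun σ k => -Real.log (1 - Real.exp (-(β * (‖k‖ ^ 2 - σ)))) with hFdef
  have hpP : ∀ σ : ℝ, pP ν β σ = (1/c) * ∫ k : E, F σ k := by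
    intro σ
    rw [pP, hFdef]
    simp only
    rw [integral_neg]
    ring
  set r : E → ℝ := fun k => (Real.exp (β * (‖k‖ ^ 2 + Δ)) - 1)⁻¹ with hrdef
  have hrho : rhoP ν β (-Δ) = ((2 * Real.pi) ^ ν)⁻¹ * ∫ k : E, r k := by
    rw [rhoP, hrdef]
    congr 1
    apply integral_congr_ae
    filter_upwards with k
    simp [sub_neg_eq_add]
  have hFΔ : ∀ k : E, F (-Δ) k = -Real.log (1 - Real.exp (-(β * (‖k‖ ^ 2 + Δ)))) := by
    intro k; rw [hFdef]; simp [sub_neg_eq_add]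
  -- integrabilities
  have h1 : Integrable (fun k : E => F (-Δ) k) := by
    have := (integrable_log_term ν hν hβ (show -Δ ≤ (0:ℝ) by linarith)).neg
    simpa [Pi.neg_def, hFdef] using this
  have hint1 : Integrable (fun k : E => F (-Δ) k + (β * (μ + Δ)) * r k) := by
    exact h1.add (hfin.const_mul _)
  have hint2 : Integrable (fun k : E => F μ k) := by
    have := (integrable_log_term ν hν hβ hμ).neg
    simpa [Pi.neg_def, hFdef] using this
  -- pointwise inequality a.e.
  have hae : ∀ᵐ k : E, F (-Δ) k + (β * (μ + Δ)) * r k ≤ F μ k := by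
    filter_upwards [ae_ne_zero ν hν] with k hk
    have hknorm : 0 < ‖k‖ := norm_pos_iff.mpr hk
    have hknorm2 : 0 < ‖k‖^2 := by positivity
    have hx : 0 < β * (‖k‖ ^ 2 - μ) := by nlinarith
    have hy : 0 < β * (‖k‖ ^ 2 + Δ) := by nlinarith
    have := log_tangent hx hy
    rw [hFΔ k, hFdef]
    simp only
    have harith : β * (‖k‖ ^ 2 + Δ) - β * (‖k‖ ^ 2 - μ) = β * (μ + Δ) := by ring
    rw [harith] at this
    rw [hrdef]
    simpa using this
  have key := integral_mono_ae hint1 hint2 hae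
  rw [integral_add h1 (hfin.const_mul _), integral_const_mul] at key
  -- conclude
  rw [hpP, hpP, hrho]
  have hcoeff : (1/c) * ((β * (μ + Δ)) * ∫ k : E, r k)
      = ((2 * Real.pi) ^ ν)⁻¹ * (∫ k : E, r k) * (μ + Δ) := by
    rw [hcdef]
    field_simp
  have := mul_le_mul_of_nonneg_left key (le_of_lt (one_div_pos.mpr hc))
  rw [mul_add] at this
  rw [hcoeff] at this
  -- fix up: the F (-Δ) integral in `this` vs goal
  have hFint : (∫ k : E, F (-Δ) k) = ∫ k : E, -Real.log (1 - Real.exp (-(β * (‖k‖ ^ 2 + Δ)))) := by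
    apply integral_congr_ae
    filter_upwards with k
    exact hFΔ k
  linarith [this]

lemma pP_nonneg (ν : ℕ) {β : ℝ} (hβ : 0 < β) {μ : ℝ} (hμ : μ ≤ 0) : 0 ≤ pP ν β μ := by
  rw [pP]
  have hI : (∫ k : EuclideanSpace ℝ (Fin ν),
      Real.log (1 - Real.exp (-(β * (‖k‖ ^ 2 - μ))))) ≤ 0 := by
    apply integral_nonpos
    intro k
    apply Real.log_nonpos
    · have : Real.exp (-(β * (‖k‖ ^ 2 - μ))) ≤ 1 := by
        rw [Real.exp_le_one_iff]
        have h2 : (0:ℝ) ≤ ‖k‖^2 := by positivity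
        nlinarith
      linarith
    · have : 0 < Real.exp (-(β * (‖k‖ ^ 2 - μ))) := Real.exp_pos _
      linarith
  have hcoef : (0:ℝ) ≤ 1 / (β * (2 * Real.pi) ^ ν) := by positivity
  nlinarith

lemma rhoP_nonneg (ν : ℕ) {β : ℝ} (hβ : 0 < β) {μ : ℝ} (hμ : μ ≤ 0) : 0 ≤ rhoP ν β μ := by
  rw [rhoP]
  apply mul_nonneg (by positivity)
  apply integral_nonneg
  intro k
  apply inv_nonneg.mpr
  have h2 : (0:ℝ) ≤ ‖k‖^2 := by positivity
  have : (1:ℝ) ≤ Real.exp (β * (‖k‖ ^ 2 - μ)) := by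
    rw [Real.one_le_exp_iff]
    nlinarith
  linarith


/-- **Pressure of the mean-field Bose gas with gap, non-condensed branch.** Let `β > 0`,
`λ > 0`, `Δ ≥ 0` with `ρ^P(β,-Δ) < ∞` (encoded by integrability of the density
integrand at `μ = -Δ`). Then for every `μ ≤ -Δ + λ ρ^P(β,-Δ)`, the mean-field pressure
with gap coincides with the gapless one: `p_λ^Δ(β,μ) = p_λ^{Δ=0}(β,μ)`. -/
theorem mean_field_pressure_noncondensed_branch
    (ν : ℕ) (hν : 1 ≤ ν) (β : ℝ) (hβ : 0 < β) (lam : ℝ) (hlam : 0 < lam)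
    (Δ : ℝ) (hΔ : 0 ≤ Δ)
    (hfin : Integrable (fun k : EuclideanSpace ℝ (Fin ν) =>
      (Real.exp (β * (‖k‖ ^ 2 + Δ)) - 1)⁻¹))
    (μ : ℝ) (hμ : μ ≤ -Δ + lam * rhoP ν β (-Δ)) :
    pMF ν β lam Δ μ = pMF ν β lam 0 μ := by
  set P : ℝ → ℝ := fun σ => pP ν β σ with hP
  set ρc : ℝ := rhoP ν β (-Δ) with hρc
  have hρc0 : 0 ≤ ρc := rhoP_nonneg ν hβ (by linarith)
  have hPnn : ∀ σ : ℝ, σ ≤ 0 → 0 ≤ P σ := fun σ hσ => pP_nonneg ν hβ hσ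
  have htang : ∀ σ : ℝ, σ ≤ 0 → P (-Δ) + ρc * (σ + Δ) ≤ P σ :=
    fun σ hσ => pP_tangent ν hν hβ hΔ hfin hσ
  -- fP facts
  have hbddf : ∀ Δ' : ℝ, 0 ≤ Δ' → ∀ ρ : ℝ, 0 ≤ ρ →
      BddAbove ((fun μ' => ρ * μ' - pP ν β μ') '' Set.Iic (-Δ')) := by
    intro Δ' hΔ' ρ hρ
    refine ⟨0, ?_⟩
    rintro x ⟨μ', hμ', rfl⟩
    simp only [Set.mem_Iic] at hμ'
    have h1 : μ' ≤ 0 := by linarith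
    have h2 : ρ * μ' ≤ 0 := mul_nonpos_of_nonneg_of_nonpos hρ h1
    have h3 := hPnn μ' h1
    simp only
    linarith
  have hnef : ∀ Δ' ρ : ℝ, ((fun μ' => ρ * μ' - pP ν β μ') '' Set.Iic (-Δ')).Nonempty :=
    fun Δ' ρ => ⟨_, ⟨-Δ', Set.mem_Iic.mpr le_rfl, rfl⟩⟩
  have hf3 : ∀ ρ : ℝ, 0 ≤ ρ → ρ * (-Δ) - P (-Δ) ≤ fP ν β Δ ρ := by
    intro ρ hρ
    exact le_csSup (hbddf Δ hΔ ρ hρ) ⟨-Δ, Set.mem_Iic.mpr le_rfl, rfl⟩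
  have hf4 : ∀ ρ : ℝ, 0 ≤ ρ → fP ν β Δ ρ ≤ fP ν β 0 ρ := by
    intro ρ hρ
    apply csSup_le_csSup (by simpa using hbddf 0 le_rfl ρ hρ) (hnef Δ ρ)
    apply Set.image_mono
    intro x hx
    simp only [Set.mem_Iic] at hx ⊢
    linarith
  have hf5 : ∀ ρ : ℝ, 0 ≤ ρ → ρ ≤ ρc → fP ν β 0 ρ ≤ fP ν β Δ ρ := by
    intro ρ hρ hρle
    apply csSup_le (by simpa using hnef 0 ρ)
    rintro x ⟨μ', hμ', rfl⟩
    simp only [Set.mem_Iic, neg_zero] at hμ'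
    by_cases hcase : μ' ≤ -Δ
    · exact le_csSup (hbddf Δ hΔ ρ hρ) ⟨μ', Set.mem_Iic.mpr hcase, rfl⟩
    · push_neg at hcase
      have htan := htang μ' hμ'
      have step : ρ * μ' - P μ' ≤ ρ * (-Δ) - P (-Δ) := by nlinarith
      simp only
      calc ρ * μ' - pP ν β μ' ≤ ρ * (-Δ) - P (-Δ) := step
        _ ≤ fP ν β Δ ρ := hf3 ρ hρ
  have hf6 : ∀ ρ : ℝ, 0 ≤ ρ → ρc ≤ ρ → fP ν β Δ ρ = ρ * (-Δ) - P (-Δ) := by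
    intro ρ hρ hρge
    apply le_antisymm
    · apply csSup_le (hnef Δ ρ)
      rintro x ⟨μ', hμ', rfl⟩
      simp only [Set.mem_Iic] at hμ'
      have hμ'0 : μ' ≤ 0 := by linarith
      have htan := htang μ' hμ'0
      simp only
      nlinarith
    · exact hf3 ρ hρ
  -- pMF facts
  have hnem : ∀ Δ' : ℝ, ((fun ρ => μ * ρ - fP ν β Δ' ρ - lam * ρ ^ 2 / 2) '' Set.Ici 0).Nonempty :=
    fun Δ' => ⟨_, ⟨0, Set.mem_Ici.mpr le_rfl, rfl⟩⟩
  have hbddm : ∀ Δ' : ℝ, 0 ≤ Δ' →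
      BddAbove ((fun ρ => μ * ρ - fP ν β Δ' ρ - lam * ρ ^ 2 / 2) '' Set.Ici 0) := by
    intro Δ' hΔ'
    refine ⟨(μ + Δ')^2 / (2 * lam) + pP ν β (-Δ'), ?_⟩
    rintro x ⟨ρ, hρ, rfl⟩
    simp only [Set.mem_Ici] at hρ
    have h3 : ρ * (-Δ') - pP ν β (-Δ') ≤ fP ν β Δ' ρ :=
      le_csSup (hbddf Δ' hΔ' ρ hρ) ⟨-Δ', Set.mem_Iic.mpr le_rfl, rfl⟩
    simp only
    have hsq : 0 ≤ (lam * ρ - (μ + Δ'))^2 := sq_nonneg _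
    have hlam' : 0 < 2 * lam := by linarith
    rw [div_add' _ _ _ (ne_of_gt hlam'), le_div_iff₀ hlam']
    nlinarith
  apply le_antisymm
  · -- pMF Δ ≤ pMF 0
    apply csSup_le (hnem Δ)
    rintro x ⟨ρ, hρ, rfl⟩
    simp only [Set.mem_Ici] at hρ
    simp only
    by_cases hcase : ρ ≤ ρc
    · have h5 := hf5 ρ hρ hcase
      calc μ * ρ - fP ν β Δ ρ - lam * ρ ^ 2 / 2
          ≤ μ * ρ - fP ν β 0 ρ - lam * ρ ^ 2 / 2 := by linarith
        _ ≤ pMF ν β lam 0 μ :=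
            le_csSup (hbddm 0 le_rfl) ⟨ρ, Set.mem_Ici.mpr hρ, rfl⟩
    · push_neg at hcase
      have h6 := hf6 ρ hρ hcase.le
      have h6c := hf6 ρc hρc0 le_rfl
      have h5c := hf5 ρc hρc0 le_rfl
      have hq : μ * ρ - fP ν β Δ ρ - lam * ρ ^ 2 / 2
          ≤ μ * ρc - fP ν β 0 ρc - lam * ρc ^ 2 / 2 := by
        rw [h6]
        have : fP ν β 0 ρc ≤ ρc * (-Δ) - P (-Δ) := by rw [← h6c]; exact h5c
        nlinarith [sq_nonneg (ρ - ρc)]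
      calc μ * ρ - fP ν β Δ ρ - lam * ρ ^ 2 / 2
          ≤ μ * ρc - fP ν β 0 ρc - lam * ρc ^ 2 / 2 := hq
        _ ≤ pMF ν β lam 0 μ :=
            le_csSup (hbddm 0 le_rfl) ⟨ρc, Set.mem_Ici.mpr hρc0, rfl⟩
  · -- pMF 0 ≤ pMF Δ
    apply csSup_le (hnem 0)
    rintro x ⟨ρ, hρ, rfl⟩
    simp only [Set.mem_Ici] at hρ
    have h4 := hf4 ρ hρ
    calc μ * ρ - fP ν β 0 ρ - lam * ρ ^ 2 / 2
        ≤ μ * ρ - fP ν β Δ ρ - lam * ρ ^ 2 / 2 := by linarith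
      _ ≤ pMF ν β lam Δ μ :=
          le_csSup (hbddm Δ hΔ) ⟨ρ, Set.mem_Ici.mpr hρ, rfl⟩
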